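/- The short-circuit evaluation function se is injective on SNF: for all P, Q in SNF, if se(P) = se(Q) then P and Q are syntactically equal. (The paper proves this by constructing an explicit inverse function g with g(se(P)) ≡ P for all P ∈ SNF.) -/

import Mathlib

/-- Evaluation trees over a set `A` of atoms, with leaves `T` and `F`. -/
inductive ETree (A : Type) : Type
  | leafT : ETree A
  | leafF : ETree A
  | node : ETree A → A → ETree A → ETree A

namespace ETree

/-- Leaf replacement `X[T↦Y, F↦Z]`. -/
def repl {A : Type} : ETree A → ETree A → ETree A → ETree A
  | leafT, y, _ => y
  | leafF, _, z => z
  | node l a r, y, z => node (repl l y z) a (repl r y z)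

end ETree

/-- Closed sequential propositional statements over `A`:
`P ::= a | T | F | ¬P | P ∧❛ P | P ∨❛ P`. -/
inductive STerm (A : Type) : Type
  | atom : A → STerm A
  | tt : STerm A
  | ff : STerm A
  | neg : STerm A → STerm A
  | and : STerm A → STerm A → STerm A
  | or : STerm A → STerm A → STerm A

/-- The short-circuit evaluation function `se : S_A → T_A`. -/
def se {A : Type} : STerm A → ETree A
  | .tt => .leafT
  | .ff => .leafF
  | .atom a => .node .leafT a .leafF
  | .neg P => (se P).repl .leafF .leafT
  | .and P Q => (se P).repl (se Q) .leafF
  | .or P Q => (se P).repl .leafT (se Q)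

/-- T-terms: `P^T ::= T | (a ∧❛ P^T) ∨❛ P^T`. -/
inductive IsTTerm {A : Type} : STerm A → Prop
  | tt : IsTTerm .tt
  | node (a : A) {P Q} : IsTTerm P → IsTTerm Q → IsTTerm (.or (.and (.atom a) P) Q)

/-- F-terms: `P^F ::= F | (a ∨❛ P^F) ∧❛ P^F`. -/
inductive IsFTerm {A : Type} : STerm A → Prop
  | ff : IsFTerm .ff
  | node (a : A) {P Q} : IsFTerm P → IsFTerm Q → IsFTerm (.and (.or (.atom a) P) Q)

/-- ℓ-terms: `P^ℓ ::= (a ∧❛ P^T) ∨❛ P^F | (¬a ∧❛ P^T) ∨❛ P^F`. -/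
inductive IsLTerm {A : Type} : STerm A → Prop
  | pos (a : A) {P Q} : IsTTerm P → IsFTerm Q → IsLTerm (.or (.and (.atom a) P) Q)
  | neg (a : A) {P Q} : IsTTerm P → IsFTerm Q → IsLTerm (.or (.and (.neg (.atom a)) P) Q)

mutual
/-- The category `P^c ::= P^ℓ | P^* ∧❛ P^d`. -/
inductive IsCTerm {A : Type} : STerm A → Prop
  | ell {P} : IsLTerm P → IsCTerm P
  | and {P Q} : IsStarTerm P → IsDTerm Q → IsCTerm (.and P Q)

/-- The category `P^d ::= P^ℓ | P^* ∨❛ P^c`. -/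
inductive IsDTerm {A : Type} : STerm A → Prop
  | ell {P} : IsLTerm P → IsDTerm P
  | or {P Q} : IsStarTerm P → IsCTerm Q → IsDTerm (.or P Q)

/-- *-terms: `P^* ::= P^c | P^d`. -/
inductive IsStarTerm {A : Type} : STerm A → Prop
  | c {P} : IsCTerm P → IsStarTerm P
  | d {P} : IsDTerm P → IsStarTerm P
end

/-- SCL Normal Forms: `P ::= P^T | P^F | P^T ∧❛ P^*`. -/
def IsSNF {A : Type} (P : STerm A) : Prop :=
  IsTTerm P ∨ IsFTerm P ∨ ∃ Q R : STerm A, IsTTerm Q ∧ IsStarTerm R ∧ P = .and Q R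

/-! A *-term `P` first evaluates an ℓ-term `L = (±a ∧❛ t) ∨❛ f`; its `T`-exits then continue with
a *-term `U` and its `F`-exits with a *-term `V` (or end), so `se P` is the node `a` whose
children are `se t[T↦se U]` and `se f[F↦se V]`, in an order given by the sign of `a`.

The key fact is that a tree `Z[b↦Y]`, with `Z` having only `b`-leaves and `Y` either the leaf `b`
or the tree of a *-term, determines `Y`, and determines `Z` once `b` is known. By induction on the
tree, the only obstruction would be a *-tree that is itself a proper graft `Z[b↦u]`; but then both
continuations of its first ℓ-term would have tree `u`, whereas one of the two continuations of a
*-term is always strictly larger than the other. As a *-term is determined by `L`, `U` and `V`,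
reading these off the two children gives injectivity on *-terms by induction on size; the three
kinds of SNF terms are told apart by the leaves of their trees. -/

namespace ETree

variable {A : Type}

def leaf : Bool → ETree A
  | true => leafT
  | false => leafF

def leaves : ETree A → Set Bool
  | leafT => {true}
  | leafF => {false}
  | node l _ r => l.leaves ∪ r.leaves

/-- `graft b X Y` is `X[T↦Y]` for `b = true` and `X[F↦Y]` for `b = false`. -/
def graft (b : Bool) (X Y : ETree A) : ETree A :=
  bif b then X.repl Y leafF else X.repl leafT Y

lemma leaf_ne_node (b : Bool) (l : ETree A) (a : A) (r : ETree A) : leaf b ≠ node l a r := by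
  cases b <;> nofun

lemma repl_congr {X y y' z z' : ETree A} (hy : true ∈ X.leaves → y = y')
    (hz : false ∈ X.leaves → z = z') : X.repl y z = X.repl y' z' := by
  induction X with
  | leafT => exact hy rfl
  | leafF => exact hz rfl
  | node l a r ihl ihr =>
    simp only [leaves, Set.mem_union] at hy hz
    simp only [repl, ihl (fun h => hy (.inl h)) (fun h => hz (.inl h)),
      ihr (fun h => hy (.inr h)) (fun h => hz (.inr h))]

lemma repl_leafT_leafF (X : ETree A) : X.repl leafT leafF = X := by
  induction X <;> simp_all [repl]

lemma repl_repl (X y z y' z' : ETree A) :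
    (X.repl y z).repl y' z' = X.repl (y.repl y' z') (z.repl y' z') := by
  induction X <;> simp_all [repl]

lemma graft_node (b : Bool) (l : ETree A) (a : A) (r Y : ETree A) :
    graft b (node l a r) Y = node (graft b l Y) a (graft b r Y) := by
  cases b <;> rfl

lemma graft_leaf (b : Bool) (Y : ETree A) : graft b (leaf b) Y = Y := by
  cases b <;> rfl

lemma graft_eq_repl {b : Bool} {X : ETree A} (hX : X.leaves ⊆ {b}) (y z : ETree A) :
    X.repl y z = graft b X (bif b then y else z) := by
  cases b <;> exact repl_congr (by simp_all [Set.subset_def]) (by simp_all [Set.subset_def])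

lemma subset_leaves_graft {b : Bool} {X : ETree A} (hX : b ∈ X.leaves) (Y : ETree A) :
    Y.leaves ⊆ (graft b X Y).leaves := by
  induction X with
  | leafT => cases b <;> simp_all [leaves, graft, repl]
  | leafF => cases b <;> simp_all [leaves, graft, repl]
  | node l a r ihl ihr =>
    rw [graft_node, leaves]
    rcases hX with h | h
    · exact (ihl h).trans Set.subset_union_left
    · exact (ihr h).trans Set.subset_union_right

lemma leaves_node_subset {l : ETree A} {a : A} {r : ETree A} {s : Set Bool} :
    (node l a r).leaves ⊆ s ↔ l.leaves ⊆ s ∧ r.leaves ⊆ s :=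
  Set.union_subset_iff

lemma eq_leaf_or_node_of_leaves_subset {X : ETree A} {b : Bool} (hX : X.leaves ⊆ {b}) :
    X = leaf b ∨ ∃ l a r, X = node l a r := by
  cases X with
  | leafT => cases b <;> simp_all [leaves, leaf]
  | leafF => cases b <;> simp_all [leaves, leaf]
  | node l a r => exact .inr ⟨l, a, r, rfl⟩

lemma sizeOf_le_repl {X : ETree A} {b : Bool} (hX : b ∈ X.leaves) (y z : ETree A) :
    sizeOf (bif b then y else z) ≤ sizeOf (X.repl y z) := by
  induction X with
  | leafT => cases b <;> simp_all [leaves, repl]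
  | leafF => cases b <;> simp_all [leaves, repl]
  | node l a r ihl ihr =>
    rcases hX with h | h
    · have := ihl h; simp only [repl, node.sizeOf_spec]; omega
    · have := ihr h; simp only [repl, node.sizeOf_spec]; omega

lemma sizeOf_lt_repl {l r : ETree A} {a : A} {b : Bool} (h : b ∈ (node l a r).leaves)
    (y z : ETree A) : sizeOf (bif b then y else z) < sizeOf ((node l a r).repl y z) := by
  rcases h with h | h
  · have := sizeOf_le_repl h y z; simp only [repl, node.sizeOf_spec]; omega
  · have := sizeOf_le_repl h y z; simp only [repl, node.sizeOf_spec]; omega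

end ETree

open ETree

section

variable {A : Type}

lemma se_and (P Q : STerm A) : se (.and P Q) = graft true (se P) (se Q) := rfl

lemma se_or (P Q : STerm A) : se (.or P Q) = graft false (se P) (se Q) := rfl

lemma se_or_and_atom (a : A) {P : STerm A} (hP : (se P).leaves ⊆ {true}) (Q : STerm A) :
    se (.or (.and (.atom a) P) Q) = node (se P) a (se Q) := by
  simp only [se, repl]
  rw [repl_congr (y' := leafT) (z' := leafF) (fun _ => rfl) (fun h => absurd (hP h) (by simp)),
    repl_leafT_leafF]

lemma se_or_and_neg_atom (a : A) {P : STerm A} (hP : (se P).leaves ⊆ {true}) (Q : STerm A) :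
    se (.or (.and (.neg (.atom a)) P) Q) = node (se Q) a (se P) := by
  simp only [se, repl]
  rw [repl_congr (y' := leafT) (z' := leafF) (fun _ => rfl) (fun h => absurd (hP h) (by simp)),
    repl_leafT_leafF]

lemma se_and_or_atom (a : A) {P : STerm A} (hP : (se P).leaves ⊆ {false}) (Q : STerm A) :
    se (.and (.or (.atom a) P) Q) = node (se Q) a (se P) := by
  simp only [se, repl]
  rw [repl_congr (y' := leafT) (z' := leafF) (fun h => absurd (hP h) (by simp)) (fun _ => rfl),
    repl_leafT_leafF]

lemma IsTTerm.leaves_se {t : STerm A} (ht : IsTTerm t) : (se t).leaves = {true} := by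
  induction ht with
  | tt => rfl
  | node a _ _ ihP ihQ => rw [se_or_and_atom a ihP.subset, leaves, ihP, ihQ, Set.union_self]

lemma IsFTerm.leaves_se {f : STerm A} (hf : IsFTerm f) : (se f).leaves = {false} := by
  induction hf with
  | ff => rfl
  | node a _ _ ihP ihQ => rw [se_and_or_atom a ihP.subset, leaves, ihP, ihQ, Set.union_self]

lemma IsTTerm.se_injective {t t' : STerm A} (ht : IsTTerm t) (ht' : IsTTerm t')
    (h : se t = se t') : t = t' := by
  induction ht generalizing t' with
  | tt => cases ht' with
    | tt => rfl
    | node b hP hQ => rw [se_or_and_atom b hP.leaves_se.subset] at h; cases h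
  | node a hP hQ ihP ihQ => cases ht' with
    | tt => rw [se_or_and_atom a hP.leaves_se.subset] at h; cases h
    | node b hP' hQ' =>
      rw [se_or_and_atom a hP.leaves_se.subset, se_or_and_atom b hP'.leaves_se.subset] at h
      injection h with hl hab hr
      rw [ihP hP' hl, hab, ihQ hQ' hr]

lemma IsFTerm.se_injective {f f' : STerm A} (hf : IsFTerm f) (hf' : IsFTerm f')
    (h : se f = se f') : f = f' := by
  induction hf generalizing f' with
  | ff => cases hf' with
    | ff => rfl
    | node b hP hQ => rw [se_and_or_atom b hP.leaves_se.subset] at h; cases h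
  | node a hP hQ ihP ihQ => cases hf' with
    | ff => rw [se_and_or_atom a hP.leaves_se.subset] at h; cases h
    | node b hP' hQ' =>
      rw [se_and_or_atom a hP.leaves_se.subset, se_and_or_atom b hP'.leaves_se.subset] at h
      injection h with hl hab hr
      rw [ihP hP' hr, hab, ihQ hQ' hl]

lemma IsLTerm.se_eq {L : STerm A} (hL : IsLTerm L) :
    ∃ s a Z₁ Z₂, Z₁.leaves = {s} ∧ Z₂.leaves = {!s} ∧ se L = node Z₁ a Z₂ := by
  cases hL with
  | pos a ht hf =>
    exact ⟨true, a, _, _, ht.leaves_se, hf.leaves_se, se_or_and_atom a ht.leaves_se.subset _⟩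
  | neg a ht hf =>
    exact ⟨false, a, _, _, hf.leaves_se, ht.leaves_se, se_or_and_neg_atom a ht.leaves_se.subset _⟩

lemma IsLTerm.se_injective {L L' : STerm A} (hL : IsLTerm L) (hL' : IsLTerm L')
    (h : se L = se L') : L = L' := by
  cases hL with
  | pos a ht hf => cases hL' with
    | pos b ht' hf' =>
      rw [se_or_and_atom a ht.leaves_se.subset, se_or_and_atom b ht'.leaves_se.subset] at h
      injection h with hl hab hr
      rw [ht.se_injective ht' hl, hab, hf.se_injective hf' hr]
    | neg b ht' hf' =>
      rw [se_or_and_atom a ht.leaves_se.subset, se_or_and_neg_atom b ht'.leaves_se.subset] at h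
      injection h with hl _ _
      have := congrArg leaves hl
      rw [ht.leaves_se, hf'.leaves_se] at this
      simp at this
  | neg a ht hf => cases hL' with
    | pos b ht' hf' =>
      rw [se_or_and_neg_atom a ht.leaves_se.subset, se_or_and_atom b ht'.leaves_se.subset] at h
      injection h with hl _ _
      have := congrArg leaves hl
      rw [hf.leaves_se, ht'.leaves_se] at this
      simp at this
    | neg b ht' hf' =>
      rw [se_or_and_neg_atom a ht.leaves_se.subset, se_or_and_neg_atom b ht'.leaves_se.subset] at h
      injection h with hl hab hr
      rw [ht.se_injective ht' hr, hab, hf.se_injective hf' hl]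

theorem IsStarTerm.induction {motive : (P : STerm A) → IsStarTerm P → Prop}
    (ell : ∀ L (hL : IsLTerm L), motive L (.c (.ell hL)))
    (and : ∀ P D (hP : IsStarTerm P) (hD : IsDTerm D), motive P hP → motive D (.d hD) →
      motive (.and P D) (.c (.and hP hD)))
    (or : ∀ P C (hP : IsStarTerm P) (hC : IsCTerm C), motive P hP → motive C (.c hC) →
      motive (.or P C) (.d (.or hP hC)))
    {P : STerm A} (hP : IsStarTerm P) : motive P hP :=
  IsStarTerm.rec (motive_1 := fun P h => motive P (.c h)) (motive_2 := fun P h => motive P (.d h))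
    (motive_3 := fun P h => motive P h) (fun hL => ell _ hL)
    (fun hP hD ihP ihD => and _ _ hP hD ihP ihD) (fun hL => ell _ hL)
    (fun hP hC ihP ihC => or _ _ hP hC ihP ihC) (fun _ ih => ih) (fun _ ih => ih) hP

lemma IsStarTerm.leaves_se {P : STerm A} (hP : IsStarTerm P) : (se P).leaves = Set.univ := by
  induction hP using IsStarTerm.induction with
  | ell L hL =>
    obtain ⟨s, a, Z₁, Z₂, h₁, h₂, h⟩ := hL.se_eq
    rw [h, leaves, h₁, h₂]
    ext c
    cases s <;> cases c <;> simp
  | and P D _ _ ihP ihD =>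
    rw [se_and, ← Set.univ_subset_iff, ← ihD]
    exact subset_leaves_graft (ihP ▸ Set.mem_univ _) _
  | or P C _ _ ihP ihC =>
    rw [se_or, ← Set.univ_subset_iff, ← ihC]
    exact subset_leaves_graft (ihP ▸ Set.mem_univ _) _

lemma IsTTerm.leaves_se_and {P Q : STerm A} (hP : IsTTerm P) (hQ : IsStarTerm Q) :
    (se (.and P Q)).leaves = Set.univ := by
  rw [se_and, ← Set.univ_subset_iff, ← hQ.leaves_se]
  exact subset_leaves_graft (hP.leaves_se ▸ rfl) _

lemma IsStarTerm.exists_se_eq_node {P : STerm A} (hP : IsStarTerm P) :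
    ∃ l a r, se P = node l a r := by
  rcases h : se P with _ | _ | ⟨l, a, r⟩
  · have := hP.leaves_se; simp_all [leaves, Set.ext_iff]
  · have := hP.leaves_se; simp_all [leaves, Set.ext_iff]
  · exact ⟨l, a, r, rfl⟩

/-- `IsTail b u v`: `u` and `v` arise from `x ∧❛ w` (for `b = true`) or `x ∨❛ w` (for `b = false`),
with `x` a *-term, and from `w`, by appending the same conjuncts and disjuncts on the right. -/
inductive IsTail : Bool → STerm A → STerm A → Prop
  | and {x : STerm A} (hx : IsStarTerm x) (w : STerm A) : IsTail true (.and x w) w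
  | or {x : STerm A} (hx : IsStarTerm x) (w : STerm A) : IsTail false (.or x w) w
  | andRight {b : Bool} {u v : STerm A} (E : STerm A) :
      IsTail b u v → IsTail b (.and u E) (.and v E)
  | orRight {b : Bool} {u v : STerm A} (E : STerm A) :
      IsTail b u v → IsTail b (.or u E) (.or v E)

lemma IsTail.sizeOf_lt {b : Bool} {u v : STerm A} (h : IsTail b u v) : sizeOf v < sizeOf u := by
  induction h <;> simp only [STerm.and.sizeOf_spec, STerm.or.sizeOf_spec] <;> omega

lemma IsTail.bool_eq {b c : Bool} {u v : STerm A} (h : IsTail b u v) (h' : IsTail c u v) :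
    b = c := by
  induction h generalizing c with
  | and => cases h'; rfl
  | or => cases h'; rfl
  | andRight E _ ih => cases h' with
    | andRight _ h' => exact ih h'
  | orRight E _ ih => cases h' with
    | orRight _ h' => exact ih h'

lemma IsTail.sizeOf_repl_lt {b : Bool} {u v : STerm A} (h : IsTail b u v) (y z : ETree A) :
    sizeOf ((se v).repl y z) < sizeOf ((se u).repl y z) := by
  induction h generalizing y z with
  | @and x hx w =>
    obtain ⟨l, a, r, hx'⟩ := hx.exists_se_eq_node
    have hmem : true ∈ (node l a r).leaves := hx' ▸ hx.leaves_se ▸ Set.mem_univ _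
    simpa [se, hx', repl_repl, repl] using sizeOf_lt_repl hmem ((se w).repl y z) z
  | @or x hx w =>
    obtain ⟨l, a, r, hx'⟩ := hx.exists_se_eq_node
    have hmem : false ∈ (node l a r).leaves := hx' ▸ hx.leaves_se ▸ Set.mem_univ _
    simpa [se, hx', repl_repl, repl] using sizeOf_lt_repl hmem y ((se w).repl y z)
  | andRight E _ ih => simpa only [se, repl_repl] using ih _ _
  | orRight E _ ih => simpa only [se, repl_repl] using ih _ _

lemma IsTail.se_ne {b : Bool} {u v : STerm A} (h : IsTail b u v) : se u ≠ se v := by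
  intro huv
  have := h.sizeOf_repl_lt leafT leafF
  rw [huv] at this
  exact lt_irrefl _ this

/-- `StarSplit P L U V`: `L` is the leftmost ℓ-term of the *-term `P`, and `U` (resp. `V`) is
the *-term evaluated after `L` yields `T` (resp. `F`); `none` means that evaluation ends there. -/
inductive StarSplit : STerm A → STerm A → Option (STerm A) → Option (STerm A) → Prop
  | ell {L : STerm A} : IsLTerm L → StarSplit L L none none
  | and {P L D : STerm A} {U V : Option (STerm A)} : IsDTerm D → StarSplit P L U V →
      StarSplit (.and P D) L (some (U.elim D (.and · D))) (V.map (.and · D))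
  | or {P L C : STerm A} {U V : Option (STerm A)} : IsCTerm C → StarSplit P L U V →
      StarSplit (.or P C) L (U.map (.or · C)) (some (V.elim C (.or · C)))

def contTree (b : Bool) : Option (STerm A) → ETree A
  | none => leaf b
  | some u => se u

lemma StarSplit.exists {P : STerm A} (hP : IsStarTerm P) : ∃ L U V, StarSplit P L U V := by
  induction hP using IsStarTerm.induction with
  | ell L hL => exact ⟨L, none, none, .ell hL⟩
  | and P D _ hD ih _ => obtain ⟨L, U, V, h⟩ := ih; exact ⟨L, _, _, .and hD h⟩
  | or P C _ hC ih _ => obtain ⟨L, U, V, h⟩ := ih; exact ⟨L, _, _, .or hC h⟩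

lemma StarSplit.isLTerm {P L : STerm A} {U V} (h : StarSplit P L U V) : IsLTerm L := by
  induction h with
  | ell hL => exact hL
  | and _ _ ih => exact ih
  | or _ _ ih => exact ih

lemma StarSplit.isStarTerm {P L : STerm A} {U V} (h : StarSplit P L U V) :
    (∀ u ∈ U, IsStarTerm u) ∧ ∀ v ∈ V, IsStarTerm v := by
  induction h with
  | ell => simp
  | @and P L D U V hD _ ih =>
    refine ⟨fun w hw => ?_, fun w hw => ?_⟩
    · cases U <;> cases hw
      · exact .d hD
      · exact .c (.and (ih.1 _ rfl) hD)
    · cases V <;> cases hw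
      exact .c (.and (ih.2 _ rfl) hD)
  | @or P L C U V hC _ ih =>
    refine ⟨fun w hw => ?_, fun w hw => ?_⟩
    · cases U <;> cases hw
      exact .d (.or (ih.1 _ rfl) hC)
    · cases V <;> cases hw
      · exact .c hC
      · exact .d (.or (ih.2 _ rfl) hC)

lemma StarSplit.sizeOf_lt {P L : STerm A} {U V} (h : StarSplit P L U V) :
    (∀ u ∈ U, sizeOf u < sizeOf P) ∧ ∀ v ∈ V, sizeOf v < sizeOf P := by
  induction h with
  | ell => simp
  | @and P L D U V _ _ ih =>
    refine ⟨fun w hw => ?_, fun w hw => ?_⟩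
    · cases U <;> cases hw
      · simp only [Option.elim, STerm.and.sizeOf_spec]; omega
      · have := ih.1 _ rfl; simp only [Option.elim, STerm.and.sizeOf_spec]; omega
    · cases V <;> cases hw
      have := ih.2 _ rfl; simp only [STerm.and.sizeOf_spec]; omega
  | @or P L C U V _ _ ih =>
    refine ⟨fun w hw => ?_, fun w hw => ?_⟩
    · cases U <;> cases hw
      have := ih.1 _ rfl; simp only [STerm.or.sizeOf_spec]; omega
    · cases V <;> cases hw
      · simp only [Option.elim, STerm.or.sizeOf_spec]; omega
      · have := ih.2 _ rfl; simp only [Option.elim, STerm.or.sizeOf_spec]; omega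

lemma StarSplit.se_eq {P L : STerm A} {U V} (h : StarSplit P L U V) :
    se P = (se L).repl (contTree true U) (contTree false V) := by
  induction h with
  | ell => exact (repl_leafT_leafF _).symm
  | @and P L D U V _ _ ih =>
    rw [se_and, graft, cond_true, ih, repl_repl]
    cases U <;> cases V <;> rfl
  | @or P L C U V _ _ ih =>
    rw [se_or, graft, cond_false, ih, repl_repl]
    cases U <;> cases V <;> rfl

lemma StarSplit.isTail {P L : STerm A} {U V} (h : StarSplit P L U V) {u v : STerm A}
    (hu : U = some u) (hv : V = some v) : IsTail false u v ∨ IsTail true v u := by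
  induction h generalizing u v with
  | ell => cases hu
  | @and P L D U V hD hs ih =>
    obtain ⟨-, hV⟩ := hs.isStarTerm
    cases V with
    | none => cases hv
    | some v₀ =>
      cases hu; cases hv
      cases U with
      | none => exact .inr (.and (hV v₀ rfl) D)
      | some u₀ => exact (ih rfl rfl).imp (.andRight D) (.andRight D)
  | @or P L C U V hC hs ih =>
    obtain ⟨hU, -⟩ := hs.isStarTerm
    cases U with
    | none => cases hu
    | some u₀ =>
      cases hu; cases hv
      cases V with
      | none => exact .inl (.or (hU u₀ rfl) C)
      | some v₀ => exact (ih rfl rfl).imp (.orRight C) (.orRight C)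

lemma IsCTerm.not_or {x w : STerm A} (hx : IsStarTerm x) (h : IsCTerm (.or x w)) : False := by
  rcases h with ⟨hL⟩
  rcases hL with ⟨a⟩ | ⟨a⟩
  all_goals
    rcases hx with (⟨⟨⟩⟩ | ⟨hx, -⟩) | (⟨⟨⟩⟩ | ⟨-, -⟩)
    rcases hx with (⟨⟨⟩⟩ | ⟨-, -⟩) | (⟨⟨⟩⟩ | ⟨-, -⟩)

lemma IsDTerm.not_and {x w : STerm A} (h : IsDTerm (.and x w)) : False := by
  rcases h with ⟨⟨⟩⟩

lemma StarSplit.inj {P Q L L' : STerm A} {U U' V V'} (hP : StarSplit P L U V)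
    (hQ : StarSplit Q L' U' V') (hL : L = L') (hU : U = U') (hV : V = V') : P = Q := by
  induction hP generalizing Q L' U' V' with
  | ell => cases hQ <;> simp_all
  | @and P L D U V hD hP ih =>
    cases hQ with
    | ell => cases hU
    | @and Q _ D' U' V' hD' hQ =>
      obtain ⟨rfl, rfl⟩ : U = U' ∧ D = D' := by
        cases U <;> cases U' <;> simp at hU
        · exact ⟨rfl, hU⟩
        · exact (hU ▸ hD).not_and.elim
        · exact (hU ▸ hD').not_and.elim
        · exact ⟨congrArg some hU.1, hU.2⟩
      have : V = V' := Option.map_injective (fun _ _ h => (STerm.and.inj h).1) hV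
      rw [ih hQ hL rfl this]
    | @or Q _ C' U' V' hC' hQ =>
      cases U <;> cases U' <;> cases V <;> cases V' <;> simp at hU hV
      subst hU
      cases hV
  | @or P L C U V hC hP ih =>
    cases hQ with
    | ell => cases hV
    | @and Q _ D' U' V' hD' hQ =>
      cases U <;> cases U' <;> cases V <;> cases V' <;> simp at hU hV
      subst hU
      cases hV
    | @or Q _ C' U' V' hC' hQ =>
      obtain ⟨rfl, rfl⟩ : V = V' ∧ C = C' := by
        cases V <;> cases V' <;> simp at hV
        · exact ⟨rfl, hV⟩
        · exact (hV ▸ hC).not_or (hQ.isStarTerm.2 _ rfl) |>.elim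
        · exact (hV ▸ hC').not_or (hP.isStarTerm.2 _ rfl) |>.elim
        · exact ⟨congrArg some hV.1, hV.2⟩
      have : U = U' := Option.map_injective (fun _ _ h => (STerm.or.inj h).1) hU
      rw [ih hQ hL this rfl]

def IsStarTree (Y : ETree A) : Prop := ∃ P, IsStarTerm P ∧ se P = Y

/-- The trees that a *-term can continue with after a `b`-exit: `b` itself (evaluation ends) or
the tree of a *-term. -/
def IsCont (b : Bool) (Y : ETree A) : Prop := Y = leaf b ∨ IsStarTree Y

lemma isCont_contTree (b : Bool) {U : Option (STerm A)} (hU : ∀ u ∈ U, IsStarTerm u) :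
    IsCont b (contTree b U) := by
  cases U with
  | none => exact .inl rfl
  | some u => exact .inr ⟨u, hU u rfl, rfl⟩

lemma eq_of_contTree_eq {b c : Bool} {U V : Option (STerm A)} (hU : ∀ u ∈ U, IsStarTerm u)
    (hV : ∀ v ∈ V, IsStarTerm v) (h : contTree b U = contTree c V) :
    (U = none ∧ V = none ∧ b = c) ∨ ∃ u v, U = some u ∧ V = some v ∧ se u = se v := by
  cases U with
  | none => cases V with
    | none => cases b <;> cases c <;> simp_all [contTree, leaf]
    | some v =>
      obtain ⟨l, a, r, hv⟩ := (hV v rfl).exists_se_eq_node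
      exact (leaf_ne_node b l a r (h.trans hv)).elim
  | some u => cases V with
    | none =>
      obtain ⟨l, a, r, hu⟩ := (hU u rfl).exists_se_eq_node
      exact (leaf_ne_node c l a r (h.symm.trans hu)).elim
    | some v => exact .inr ⟨u, v, rfl, rfl, h⟩

lemma StarSplit.contTree_ne {P L : STerm A} {U V} (h : StarSplit P L U V) :
    contTree true U ≠ contTree false V := by
  intro hUV
  rcases eq_of_contTree_eq h.isStarTerm.1 h.isStarTerm.2 hUV with ⟨-, -, ⟨⟩⟩ | ⟨u, v, rfl, rfl, huv⟩
  rcases h.isTail rfl rfl with h | h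
  · exact h.se_ne huv
  · exact h.se_ne huv.symm

lemma IsStarTree.exists_eq_node {Y : ETree A} (hY : IsStarTree Y) :
    ∃ s Z₁ a Z₂ Y₁ Y₂, Z₁.leaves ⊆ {s} ∧ Z₂.leaves ⊆ {!s} ∧ IsCont s Y₁ ∧ IsCont (!s) Y₂ ∧
      Y₁ ≠ Y₂ ∧ Y = node (graft s Z₁ Y₁) a (graft (!s) Z₂ Y₂) := by
  obtain ⟨P, hP, rfl⟩ := hY
  obtain ⟨L, U, V, h⟩ := StarSplit.exists hP
  obtain ⟨s, a, Z₁, Z₂, hZ₁, hZ₂, hL⟩ := h.isLTerm.se_eq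
  have hU := isCont_contTree true h.isStarTerm.1
  have hV := isCont_contTree false h.isStarTerm.2
  rw [h.se_eq, hL, repl, graft_eq_repl hZ₁.subset, graft_eq_repl hZ₂.subset]
  cases s
  · exact ⟨_, _, a, _, _, _, hZ₁.subset, hZ₂.subset, hV, hU, h.contTree_ne.symm, rfl⟩
  · exact ⟨_, _, a, _, _, _, hZ₁.subset, hZ₂.subset, hU, hV, h.contTree_ne, rfl⟩

def ETree.GraftsUniquely (X : ETree A) : Prop :=
  ∀ ⦃b c : Bool⦄ ⦃Z₁ Z₂ Y₁ Y₂ : ETree A⦄, Z₁.leaves ⊆ {b} → Z₂.leaves ⊆ {c} → IsCont b Y₁ →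
    IsCont c Y₂ → graft b Z₁ Y₁ = X → graft c Z₂ Y₂ = X → Y₁ = Y₂ ∧ (b = c → Z₁ = Z₂)

lemma not_isCont_graft_node {b c : Bool} {zl zr Y : ETree A} {a : A}
    (hl : (graft c zl Y).GraftsUniquely) (hr : (graft c zr Y).GraftsUniquely)
    (hZ : (node zl a zr).leaves ⊆ {c}) (hY : IsCont c Y) :
    ¬ IsCont b (graft c (node zl a zr) Y) := by
  rw [graft_node]
  rintro (h | hX)
  · exact leaf_ne_node b _ _ _ h.symm
  obtain ⟨s, Z₁, a', Z₂, Y₁, Y₂, hZ₁, hZ₂, hY₁, hY₂, hne, hX⟩ := hX.exists_eq_node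
  injection hX with h₁ _ h₂
  obtain ⟨hzl, hzr⟩ := leaves_node_subset.1 hZ
  exact hne ((hl hZ₁ hzl hY₁ hY h₁.symm rfl).1.trans (hr hZ₂ hzr hY₂ hY h₂.symm rfl).1.symm)

lemma graftsUniquely_of_children {X : ETree A}
    (ih : ∀ ⦃c zl a zr Y⦄, graft c (node zl a zr) Y = X →
      (graft c zl Y).GraftsUniquely ∧ (graft c zr Y).GraftsUniquely) :
    X.GraftsUniquely := by
  intro b c Z₁ Z₂ Y₁ Y₂ hZ₁ hZ₂ hY₁ hY₂ h₁ h₂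
  rcases eq_leaf_or_node_of_leaves_subset hZ₁ with rfl | ⟨zl₁, a₁, zr₁, rfl⟩ <;>
    rcases eq_leaf_or_node_of_leaves_subset hZ₂ with rfl | ⟨zl₂, a₂, zr₂, rfl⟩
  · rw [graft_leaf] at h₁ h₂
    exact ⟨h₁.trans h₂.symm, by rintro rfl; rfl⟩
  · rw [graft_leaf] at h₁
    obtain ⟨hl, hr⟩ := ih h₂
    exact (not_isCont_graft_node hl hr hZ₂ hY₂ (h₂.trans h₁.symm ▸ hY₁)).elim
  · rw [graft_leaf] at h₂
    obtain ⟨hl, hr⟩ := ih h₁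
    exact (not_isCont_graft_node hl hr hZ₁ hY₁ (h₁.trans h₂.symm ▸ hY₂)).elim
  · obtain ⟨hl, hr⟩ := ih h₁
    have h := h₂.trans h₁.symm
    rw [graft_node, graft_node] at h
    injection h with hzl ha hzr
    obtain ⟨hzl₁, hzr₁⟩ := leaves_node_subset.1 hZ₁
    obtain ⟨hzl₂, hzr₂⟩ := leaves_node_subset.1 hZ₂
    obtain ⟨hY, hl⟩ := hl hzl₁ hzl₂ hY₁ hY₂ rfl hzl
    obtain ⟨-, hr⟩ := hr hzr₁ hzr₂ hY₁ hY₂ rfl hzr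
    exact ⟨hY, fun hbc => by rw [hl hbc, ha, hr hbc]⟩

theorem ETree.graftsUniquely (X : ETree A) : X.GraftsUniquely := by
  induction X with
  | leafT => exact graftsUniquely_of_children fun c _ _ _ _ h => by rw [graft_node] at h; cases h
  | leafF => exact graftsUniquely_of_children fun c _ _ _ _ h => by rw [graft_node] at h; cases h
  | node l a r ihl ihr =>
    refine graftsUniquely_of_children fun c _ _ _ _ h => ?_
    rw [graft_node] at h
    injection h with hl _ hr
    exact ⟨hl ▸ ihl, hr ▸ ihr⟩

lemma not_isTail_pair {u v : STerm A} (h : IsTail false u v ∨ IsTail true v u)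
    (h' : IsTail false v u ∨ IsTail true u v) : False := by
  rcases h with h | h <;> rcases h' with h' | h'
  · exact absurd h.sizeOf_lt (not_lt.2 h'.sizeOf_lt.le)
  · exact absurd (h.bool_eq h') (by decide)
  · exact absurd (h.bool_eq h') (by decide)
  · exact absurd h.sizeOf_lt (not_lt.2 h'.sizeOf_lt.le)

lemma eq_of_contTree_eq_of_injOn {b c : Bool} {W W' : Option (STerm A)}
    (hW : ∀ w ∈ W, IsStarTerm w) (hW' : ∀ w ∈ W', IsStarTerm w)
    (hinj : ∀ w ∈ W, ∀ w', IsStarTerm w' → se w = se w' → w = w')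
    (h : contTree b W = contTree c W') : W = W' ∧ (W = none → b = c) := by
  rcases eq_of_contTree_eq hW hW' h with ⟨rfl, rfl, rfl⟩ | ⟨w, w', rfl, rfl, hww⟩
  · exact ⟨rfl, fun _ => rfl⟩
  · exact ⟨congrArg some (hinj w rfl w' (hW' w' rfl) hww), nofun⟩

lemma StarSplit.isCont_cond {P L : STerm A} {U V} (h : StarSplit P L U V) (b : Bool) :
    IsCont b (bif b then contTree true U else contTree false V) := by
  cases b
  · exact isCont_contTree false h.isStarTerm.2
  · exact isCont_contTree true h.isStarTerm.1

lemma StarSplit.not_cross {P Q L L' : STerm A} {U U' V V'} (hP : StarSplit P L U V)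
    (hQ : StarSplit Q L' U' V')
    (hinjU : ∀ u ∈ U, ∀ w, IsStarTerm w → se u = se w → u = w)
    (hinjV : ∀ v ∈ V, ∀ w, IsStarTerm w → se v = se w → v = w)
    (hUV : contTree true U = contTree false V') (hVU : contTree false V = contTree true U') :
    False := by
  obtain ⟨rfl, hU⟩ := eq_of_contTree_eq_of_injOn hP.isStarTerm.1 hQ.isStarTerm.2 hinjU hUV
  obtain ⟨rfl, hV⟩ := eq_of_contTree_eq_of_injOn hP.isStarTerm.2 hQ.isStarTerm.1 hinjV hVU
  obtain ⟨u, rfl⟩ := Option.ne_none_iff_exists'.1 fun h => Bool.noConfusion (hU h)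
  obtain ⟨v, rfl⟩ := Option.ne_none_iff_exists'.1 fun h => Bool.noConfusion (hV h)
  exact not_isTail_pair (hP.isTail rfl rfl) (hQ.isTail rfl rfl)

lemma StarSplit.eq_of_se_eq {P Q L L' : STerm A} {U U' V V'} (hP : StarSplit P L U V)
    (hQ : StarSplit Q L' U' V')
    (ih : ∀ w w' : STerm A, sizeOf w < sizeOf P → IsStarTerm w → IsStarTerm w' → se w = se w' →
      w = w')
    (h : se P = se Q) : P = Q := by
  have hinjU u (hu : u ∈ U) w := ih u w (hP.sizeOf_lt.1 u hu) (hP.isStarTerm.1 u hu)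
  have hinjV v (hv : v ∈ V) w := ih v w (hP.sizeOf_lt.2 v hv) (hP.isStarTerm.2 v hv)
  obtain ⟨s, a, Z₁, Z₂, hZ₁, hZ₂, hL⟩ := hP.isLTerm.se_eq
  obtain ⟨s', a', Z₁', Z₂', hZ₁', hZ₂', hL'⟩ := hQ.isLTerm.se_eq
  rw [hP.se_eq, hQ.se_eq, hL, hL', repl, repl, graft_eq_repl hZ₁.subset,
    graft_eq_repl hZ₂.subset, graft_eq_repl hZ₁'.subset, graft_eq_repl hZ₂'.subset] at h
  injection h with hl ha hr
  obtain ⟨hl, hZl⟩ := graftsUniquely _ hZ₁.subset hZ₁'.subset (hP.isCont_cond s)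
    (hQ.isCont_cond s') hl rfl
  obtain ⟨hr, hZr⟩ := graftsUniquely _ hZ₂.subset hZ₂'.subset (hP.isCont_cond !s)
    (hQ.isCont_cond !s') hr rfl
  by_cases hs : s = s'
  · subst hs
    have hUV : contTree true U = contTree true U' ∧ contTree false V = contTree false V' := by
      cases s
      exacts [⟨hr, hl⟩, ⟨hl, hr⟩]
    have hLL : L = L' := hP.isLTerm.se_injective hQ.isLTerm (by rw [hL, hL', hZl rfl, ha, hZr rfl])
    exact hP.inj hQ hLL
      (eq_of_contTree_eq_of_injOn hP.isStarTerm.1 hQ.isStarTerm.1 hinjU hUV.1).1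
      (eq_of_contTree_eq_of_injOn hP.isStarTerm.2 hQ.isStarTerm.2 hinjV hUV.2).1
  · obtain rfl : s' = !s := by cases s <;> cases s' <;> simp_all
    cases s
    exacts [(hP.not_cross hQ hinjU hinjV hr hl).elim, (hP.not_cross hQ hinjU hinjV hl hr).elim]

theorem IsStarTerm.se_injective {P Q : STerm A} (hP : IsStarTerm P) (hQ : IsStarTerm Q)
    (h : se P = se Q) : P = Q := by
  induction hn : sizeOf P using Nat.strong_induction_on generalizing P Q with
  | _ n ih =>
  obtain ⟨L, U, V, hs⟩ := StarSplit.exists hP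
  obtain ⟨L', U', V', hs'⟩ := StarSplit.exists hQ
  exact hs.eq_of_se_eq hs' (fun w w' hw hws hws' hww => ih _ (hn ▸ hw) hws hws' hww rfl) h

end

/-- `se` is injective on SNF: SNF-terms with equal evaluation trees are syntactically equal. -/
theorem se_injective_on_snf {A : Type} [Nonempty A] (P Q : STerm A)
    (hP : IsSNF P) (hQ : IsSNF Q) (h : se P = se Q) : P = Q := by
  have hleaves := congrArg leaves h
  rcases hP with hP | hP | ⟨P₁, P₂, hP₁, hP₂, rfl⟩ <;>
    rcases hQ with hQ | hQ | ⟨Q₁, Q₂, hQ₁, hQ₂, rfl⟩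
  · exact hP.se_injective hQ h
  · simp [hP.leaves_se, hQ.leaves_se] at hleaves
  · simp [hP.leaves_se, hQ₁.leaves_se_and hQ₂, Set.ext_iff] at hleaves
  · simp [hP.leaves_se, hQ.leaves_se] at hleaves
  · exact hP.se_injective hQ h
  · simp [hP.leaves_se, hQ₁.leaves_se_and hQ₂, Set.ext_iff] at hleaves
  · simp [hQ.leaves_se, hP₁.leaves_se_and hP₂, Set.ext_iff] at hleaves
  · simp [hQ.leaves_se, hP₁.leaves_se_and hP₂, Set.ext_iff] at hleaves
  · obtain ⟨h₂, h₁⟩ := graftsUniquely _ hP₁.leaves_se.subset hQ₁.leaves_se.subset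
      (.inr ⟨P₂, hP₂, rfl⟩) (.inr ⟨Q₂, hQ₂, rfl⟩) h rfl
    rw [hP₁.se_injective hQ₁ (h₁ rfl), hP₂.se_injective hQ₂ h₂]
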